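/- arXiv:1603.08298 — 3 statements merged into one kernel-verified Lean document; each statement's English description precedes it below -/
import Mathlib

section
/- For every t > 0, the Laplace transform of the normalized return time on the induced system satisfies φ_A(t) := ∫_A e^{-μ(A)·τ_A·t} dμ_A = 1 - (e^{μ(A)t}-1)/μ(A) + (e^{μ(A)t}-1)/μ(A) · (1 - e^{-μ(A)t}) · ∑_{k=0}^∞ e^{-μ(A)kt}·s_A(k). -/
/-!
Write `q = exp (-μ(A) t)` and `τ = τ_A`. Wherever `τ < ∞`, which by Poincaré recurrence holds
almost everywhere on `A`, the geometric sum gives `q ^ τ = 1 - (1 - q) ∑_{k < τ} q ^ k`, so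
`∫_A q ^ τ dμ = μ(A) - (1 - q) ∑_k q ^ k μ(A ∩ {τ > k})`. By invariance `μ(τ > k) = s_A(k)`,
and `{τ > k} \ A` is the event that `x, T x, …, T^k x` all avoid `A`, of measure `s_A(k + 1)`;
hence `μ(A ∩ {τ > k}) = s_A(k) - s_A(k + 1)`, and summation by parts leaves a series in `s_A`.
-/

open MeasureTheory Filter Topology

noncomputable def hitTime {X : Type*} (T : X → X) (A : Set X) (x : X) : ℕ∞ :=
  sInf ((↑) '' {k : ℕ | 1 ≤ k ∧ T^[k] x ∈ A})

noncomputable def sweep {X : Type*} [MeasurableSpace X] (μ : Measure X) (T : X → X)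
    (A : Set X) (k : ℕ) : ℝ :=
  (μ (⋂ i ∈ Finset.range k, T^[i] ⁻¹' Aᶜ)).toReal

theorem ENat.eq_of_forall_natCast_lt_iff {m n : ℕ∞}
    (h : ∀ k : ℕ, (k : ℕ∞) < m ↔ (k : ℕ∞) < n) : m = n := by
  rcases lt_trichotomy m n with hlt | heq | hlt
  · obtain ⟨k, rfl⟩ := ENat.ne_top_iff_exists.mp hlt.ne_top
    exact absurd ((h k).2 hlt) (lt_irrefl _)
  · exact heq
  · obtain ⟨k, rfl⟩ := ENat.ne_top_iff_exists.mp hlt.ne_top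
    exact absurd ((h k).1 hlt) (lt_irrefl _)

theorem ENat.measurable_of_measurableSet_natCast_lt {X : Type*} [MeasurableSpace X]
    {f : X → ℕ∞} (hf : ∀ k : ℕ, MeasurableSet {x | (k : ℕ∞) < f x}) : Measurable f := by
  refine measurable_to_countable' fun n => ?_
  have hfib : f ⁻¹' {n} = ⋂ k : ℕ, {x | (k : ℕ∞) < f x ↔ (k : ℕ∞) < n} := by
    ext x
    simp only [Set.mem_preimage, Set.mem_singleton_iff, Set.mem_iInter, Set.mem_ofPred_eq]
    exact ⟨fun h k => h ▸ Iff.rfl, ENat.eq_of_forall_natCast_lt_iff⟩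
  rw [hfib]
  refine MeasurableSet.iInter fun k => ?_
  by_cases hk : (k : ℕ∞) < n
  · simp only [hk, iff_true]
    exact hf k
  · simp only [hk, iff_false]
    exact (hf k).compl

section HitTime
variable {X : Type*} (T : X → X) (A : Set X)

theorem hitTime_le_of_iterate_mem {x : X} {n : ℕ} (hn : 1 ≤ n) (hx : T^[n] x ∈ A) :
    hitTime T A x ≤ n :=
  sInf_le ⟨n, ⟨hn, hx⟩, rfl⟩

theorem lt_hitTime_iff (x : X) (k : ℕ) :
    (k : ℕ∞) < hitTime T A x ↔ ∀ i, 1 ≤ i → i ≤ k → T^[i] x ∉ A := by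
  refine ⟨fun h i hi hik hx => ?_, fun h => ?_⟩
  · exact hik.not_gt (by exact_mod_cast h.trans_le (hitTime_le_of_iterate_mem T A hi hx))
  · rw [hitTime, ← ENat.add_one_le_iff (ENat.natCast_ne_top k), le_sInf_iff]
    rintro _ ⟨i, ⟨hi, hx⟩, rfl⟩
    exact_mod_cast not_le.mp fun hik => h i hi hik hx

theorem setOf_lt_hitTime (k : ℕ) :
    {x | (k : ℕ∞) < hitTime T A x} = T ⁻¹' ⋂ i ∈ Finset.range k, T^[i] ⁻¹' Aᶜ := by
  ext x
  simp only [Set.mem_ofPred_eq, lt_hitTime_iff, Set.mem_preimage, Set.mem_iInter,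
    Finset.mem_range, Set.mem_compl_iff, ← Function.iterate_succ_apply]
  refine ⟨fun h i hi => h (i + 1) (by omega) hi, ?_⟩
  rintro h (_ | i) h1 hi
  · omega
  · exact h i hi

theorem setOf_lt_hitTime_sdiff (k : ℕ) :
    {x | (k : ℕ∞) < hitTime T A x} \ A = ⋂ i ∈ Finset.range (k + 1), T^[i] ⁻¹' Aᶜ := by
  ext x
  simp only [setOf_lt_hitTime, Set.mem_sdiff, Set.mem_preimage, Set.mem_iInter, Finset.mem_range,
    Set.mem_compl_iff, ← Function.iterate_succ_apply]
  refine ⟨?_, fun h => ⟨fun i hi => h (i + 1) (by omega), h 0 (by omega)⟩⟩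
  rintro ⟨h, h0⟩ (_ | i) hi
  · exact h0
  · exact h i (by omega)

variable [MeasurableSpace X] {T A}

theorem measurableSet_setOf_lt_hitTime (hT : Measurable T) (hA : MeasurableSet A) (k : ℕ) :
    MeasurableSet {x | (k : ℕ∞) < hitTime T A x} := by
  rw [setOf_lt_hitTime]
  exact hT (Finset.measurableSet_biInter _ fun i _ => hA.compl.preimage (hT.iterate i))

theorem measurable_hitTime (hT : Measurable T) (hA : MeasurableSet A) :
    Measurable (hitTime T A) :=
  ENat.measurable_of_measurableSet_natCast_lt (measurableSet_setOf_lt_hitTime hT hA)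

variable {μ : Measure X}

theorem MeasureTheory.Conservative.ae_restrict_hitTime_ne_top (hT : Conservative T μ)
    (hA : NullMeasurableSet A μ) : ∀ᵐ x ∂μ.restrict A, hitTime T A x ≠ ⊤ := by
  rw [ae_restrict_iff'₀ hA]
  filter_upwards [hT.ae_mem_imp_frequently_image_mem hA] with x hx hxA
  obtain ⟨n, hn, hnA⟩ := (hx hxA).forall_exists_of_atTop 1
  exact ne_top_of_le_ne_top (ENat.natCast_ne_top n) (hitTime_le_of_iterate_mem T A hn hnA)

theorem MeasureTheory.MeasurePreserving.measureReal_setOf_lt_hitTime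
    (hT : MeasurePreserving T μ μ) (hA : MeasurableSet A) (k : ℕ) :
    μ.real {x | (k : ℕ∞) < hitTime T A x} = sweep μ T A k := by
  rw [setOf_lt_hitTime, measureReal_def, hT.measure_preimage
    (Finset.measurableSet_biInter _ fun i _ =>
      hA.compl.preimage (hT.measurable.iterate i)).nullMeasurableSet, sweep]

theorem MeasureTheory.MeasurePreserving.measureReal_setOf_lt_hitTime_inter [IsFiniteMeasure μ]
    (hT : MeasurePreserving T μ μ) (hA : MeasurableSet A) (k : ℕ) :
    μ.real ({x | (k : ℕ∞) < hitTime T A x} ∩ A) = sweep μ T A k - sweep μ T A (k + 1) := by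
  have hsplit := measureReal_inter_add_sdiff (μ := μ) (s := {x | (k : ℕ∞) < hitTime T A x}) hA
  rw [setOf_lt_hitTime_sdiff, hT.measureReal_setOf_lt_hitTime hA] at hsplit
  change _ + sweep μ T A (k + 1) = _ at hsplit
  linarith

end HitTime

theorem pow_toNat_eq_one_sub_mul_tsum (q : ℝ) {n : ℕ∞} (hn : n ≠ ⊤) :
    q ^ n.toNat = 1 - (1 - q) * ∑' k : ℕ, if (k : ℕ∞) < n then q ^ k else 0 := by
  lift n to ℕ using hn
  simp only [ENat.toNat_natCast, Nat.cast_lt]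
  rw [tsum_eq_sum (s := Finset.range n) fun k hk => if_neg (by simpa using hk),
    Finset.sum_ite_of_true fun k hk => by simpa using hk, mul_neg_geom_sum]
  ring

section Laplace
variable {X : Type*} [MeasurableSpace X]

theorem integral_tsum_indicator_pow {ν : Measure X} [IsFiniteMeasure ν] {q : ℝ} (hq0 : 0 ≤ q)
    (hq1 : q < 1) {G : ℕ → Set X} (hG : ∀ k, MeasurableSet (G k)) :
    ∫ x, ∑' k, (G k).indicator (fun _ => q ^ k) x ∂ν = ∑' k, q ^ k * ν.real (G k) := by
  have hint k : ∫ x, (G k).indicator (fun _ => q ^ k) x ∂ν = q ^ k * ν.real (G k) := by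
    rw [integral_indicator_const _ (hG k), smul_eq_mul, mul_comm]
  have hnorm k : ∫ x, ‖(G k).indicator (fun _ => q ^ k) x‖ ∂ν = q ^ k * ν.real (G k) := by
    simp_rw [Real.norm_of_nonneg (Set.indicator_nonneg (fun _ _ => pow_nonneg hq0 k) _), hint]
  rw [← integral_tsum_of_summable_integral_norm (fun k => (integrable_const _).indicator (hG k))]
  · exact tsum_congr hint
  · simp_rw [hnorm]
    refine Summable.of_nonneg_of_le (fun k => by positivity)
      (fun k => mul_le_mul_of_nonneg_left (measureReal_mono (Set.subset_univ _)) (pow_nonneg hq0 k))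
      ((summable_geometric_of_lt_one hq0 hq1).mul_right (ν.real Set.univ))

theorem tsum_pow_mul_sub_succ {q : ℝ} (hq : q ≠ 0) {s : ℕ → ℝ}
    (hs : Summable fun k => q ^ k * s k) :
    ∑' k, q ^ k * (s k - s (k + 1)) = ∑' k, q ^ k * s k - (∑' k, q ^ k * s k - s 0) / q := by
  have hshift : Summable fun k => q ^ k * s (k + 1) :=
    (((summable_nat_add_iff 1).mpr hs).mul_left q⁻¹).congr fun k => by
      rw [pow_succ]; field_simp
  have hsucc : ∑' k, q ^ k * s (k + 1) = (∑' k, q ^ k * s k - s 0) / q := by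
    rw [hs.tsum_eq_zero_add, eq_div_iff hq, ← tsum_mul_right, pow_zero, one_mul,
      add_sub_cancel_left]
    exact tsum_congr fun k => by ring
  simp_rw [mul_sub]
  rw [hs.tsum_sub hshift, hsucc]

variable {μ : Measure X} {T : X → X} {A : Set X}

theorem summable_pow_mul_sweep [IsFiniteMeasure μ] {q : ℝ} (hq0 : 0 ≤ q) (hq1 : q < 1) :
    Summable fun k => q ^ k * sweep μ T A k :=
  Summable.of_nonneg_of_le (fun k => mul_nonneg (pow_nonneg hq0 k) measureReal_nonneg)
    (fun k => mul_le_mul_of_nonneg_left (measureReal_mono (Set.subset_univ _)) (pow_nonneg hq0 k))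
    ((summable_geometric_of_lt_one hq0 hq1).mul_right (μ.real Set.univ))

theorem MeasureTheory.MeasurePreserving.setIntegral_pow_hitTime [IsFiniteMeasure μ]
    (hT : MeasurePreserving T μ μ) (hA : MeasurableSet A) {q : ℝ} (hq0 : 0 ≤ q) (hq1 : q < 1) :
    ∫ x in A, q ^ (hitTime T A x).toNat ∂μ =
      μ.real A - (1 - q) * ∑' k : ℕ, q ^ k * (sweep μ T A k - sweep μ T A (k + 1)) := by
  have hG := measurableSet_setOf_lt_hitTime hT.measurable hA
  have hint : Integrable (fun x => q ^ (hitTime T A x).toNat) (μ.restrict A) := by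
    refine Integrable.of_bound ((Measurable.of_discrete (f := fun n : ℕ∞ => q ^ n.toNat)).comp
      (measurable_hitTime hT.measurable hA)).aestronglyMeasurable 1 (ae_of_all _ fun x => ?_)
    rw [norm_pow, Real.norm_of_nonneg hq0]
    exact pow_le_one₀ hq0 hq1.le
  have hF : ∀ᵐ x ∂μ.restrict A, 1 - q ^ (hitTime T A x).toNat =
      (1 - q) * ∑' k : ℕ, {x | (k : ℕ∞) < hitTime T A x}.indicator (fun _ => q ^ k) x :=
    (hT.conservative.ae_restrict_hitTime_ne_top hA.nullMeasurableSet).mono fun x hx => by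
      simp only [pow_toNat_eq_one_sub_mul_tsum q hx, Set.indicator_apply, Set.mem_ofPred_eq]
      ring
  have hcompl : μ.real A - ∫ x in A, q ^ (hitTime T A x).toNat ∂μ =
      (1 - q) * ∑' k : ℕ, q ^ k * (sweep μ T A k - sweep μ T A (k + 1)) :=
    calc μ.real A - ∫ x in A, q ^ (hitTime T A x).toNat ∂μ
        = ∫ x in A, (1 - q ^ (hitTime T A x).toNat) ∂μ := by
          rw [integral_sub (integrable_const 1) hint, setIntegral_const, smul_eq_mul, mul_one]
      _ = ∫ x in A, (1 - q) *
            ∑' k : ℕ, {x | (k : ℕ∞) < hitTime T A x}.indicator (fun _ => q ^ k) x ∂μ :=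
          integral_congr_ae hF
      _ = (1 - q) * ∑' k : ℕ, q ^ k * (μ.restrict A).real {x | (k : ℕ∞) < hitTime T A x} := by
          rw [integral_const_mul, integral_tsum_indicator_pow hq0 hq1 hG]
      _ = _ := by
          simp_rw [measureReal_restrict_apply (hG _), hT.measureReal_setOf_lt_hitTime_inter hA]
  linarith

end Laplace

theorem laplace_return_time {X : Type*} [MeasurableSpace X] (μ : Measure X)
    [IsProbabilityMeasure μ] (T : X → X) (hE : Ergodic T μ)
    (A : Set X) (hA : MeasurableSet A) (hpos : 0 < μ A) (t : ℝ) (ht : 0 < t) :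
    ∫ x, Real.exp (-((μ A).toReal * ((hitTime T A x).toNat : ℝ) * t))
        ∂(ProbabilityTheory.cond μ A) =
      1 - (Real.exp ((μ A).toReal * t) - 1) / (μ A).toReal +
        (Real.exp ((μ A).toReal * t) - 1) / (μ A).toReal *
          (1 - Real.exp (-((μ A).toReal * t))) *
            ∑' k : ℕ, Real.exp (-((μ A).toReal * k * t)) * sweep μ T A k := by
  have ha : 0 < (μ A).toReal := ENNReal.toReal_pos hpos.ne' (measure_ne_top μ A)
  set q := Real.exp (-((μ A).toReal * t))
  have hq0 : 0 < q := Real.exp_pos _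
  have hq1 : q < 1 := Real.exp_lt_one_iff.mpr (neg_neg_of_pos (mul_pos ha ht))
  have hpow (n : ℕ) : Real.exp (-((μ A).toReal * n * t)) = q ^ n := by
    rw [← Real.exp_nat_mul]; ring_nf
  have hexp : Real.exp ((μ A).toReal * t) = q⁻¹ := by rw [← Real.exp_neg, neg_neg]
  have hsweep0 : sweep μ T A 0 = 1 := by simp [sweep]
  simp_rw [hpow, hexp]
  rw [ProbabilityTheory.cond, integral_smul_measure,
    hE.toMeasurePreserving.setIntegral_pow_hitTime hA hq0.le hq1,
    tsum_pow_mul_sub_succ hq0.ne' (summable_pow_mul_sweep hq0.le hq1), hsweep0,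
    ENNReal.toReal_inv, smul_eq_mul, measureReal_def]
  field_simp
  ring
end

section
/- In a ψ-mixing system, for every positively-measured A with s_A(k) > 0 for all k, the escape rate ρ_A := lim_{k→∞} -log(s_A(k))/k exists (possibly equal to +∞). -/
open MeasureTheory Filter Topology

/-!
Mixing at lag zero says that an event of level `n` and the pullback under `T^[n]` of any event
of the filtration are correlated by at most the factor `1 + ψ 0`. Avoiding `A` during
`j + nA + m` steps implies avoiding it during the first `j` steps and during the `m` steps
starting at time `nA + j`, whence `s (j + nA + m) ≤ (1 + ψ 0) * s j * s m`. Thus `a = -log s`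
is superadditive up to the gap `nA` and the error `c = log (1 + ψ 0)`, and Fekete's argument
gives `a k / k → ⨆ m ≥ 1, (a m - c) / (m + nA)` in `EReal`.
-/

section AlmostSuperadditive

variable {a : ℕ → ℝ} {g : ℕ} {c : ℝ}

theorem add_mul_le_of_almost_superadditive (h : ∀ j m, a j + a m - c ≤ a (j + g + m))
    (m j q : ℕ) : a j + q * (a m - c) ≤ a (j + q * (m + g)) := by
  induction q with
  | zero => simp
  | succ q ih =>
    have hstep := h (j + q * (m + g)) m
    rw [show j + q * (m + g) + g + m = j + (q + 1) * (m + g) by ring] at hstep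
    push_cast
    linarith

theorem div_mul_le_of_almost_superadditive (h0 : ∀ k, 0 ≤ a k)
    (h : ∀ j m, a j + a m - c ≤ a (j + g + m)) (m k : ℕ) :
    ((k / (m + g) : ℕ) : ℝ) * (a m - c) ≤ a k := by
  have hiter := add_mul_le_of_almost_superadditive h m (k % (m + g)) (k / (m + g))
  rw [Nat.mod_add_div'] at hiter
  linarith [h0 (k % (m + g))]

theorem tendsto_natCast_div_div_natCast {P : ℕ} (hP : 0 < P) :
    Tendsto (fun k : ℕ => ((k / P : ℕ) : ℝ) / k) atTop (𝓝 (1 / P)) := by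
  have hPR : (0 : ℝ) < P := Nat.cast_pos.mpr hP
  have hfloor : Tendsto (fun k : ℕ => (⌊(k : ℝ) / P⌋₊ : ℝ) / (k / P)) atTop (𝓝 1) :=
    tendsto_nat_floor_div_atTop.comp (tendsto_natCast_atTop_atTop.atTop_div_const hPR)
  convert hfloor.div_const (P : ℝ) using 2 with k
  rw [Nat.floor_div_eq_div]
  field_simp

theorem tendsto_div_of_almost_superadditive (h0 : ∀ k, 0 ≤ a k)
    (h : ∀ j m, a j + a m - c ≤ a (j + g + m)) :
    Tendsto (fun k : ℕ => ((a k / k : ℝ) : EReal)) atTop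
      (𝓝 (⨆ m ≥ 1, (((a m - c) / (m + g) : ℝ) : EReal))) := by
  refine tendsto_of_le_liminf_of_limsup_le (iSup₂_le fun m hm => ?_) ?_
  · have hP : 0 < m + g := by omega
    have hlower : Tendsto (fun k : ℕ => (((k / (m + g) : ℕ) : ℝ) * (a m - c) / k : ℝ))
        atTop (𝓝 ((a m - c) / (m + g))) := by
      convert (tendsto_natCast_div_div_natCast hP).mul_const (a m - c) using 2 with k
      · ring
      · push_cast; ring
    rw [← (EReal.tendsto_coe.2 hlower).liminf_eq]
    refine liminf_le_liminf (Eventually.of_forall fun k => ?_)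
    exact EReal.coe_le_coe_iff.2
      (div_le_div_of_nonneg_right (div_mul_le_of_almost_superadditive h0 h m k) k.cast_nonneg)
  · refine EReal.le_of_forall_lt_iff_le.1 fun r hr => ?_
    have hupper : Tendsto (fun k : ℕ => r + (r * g + c) / k) atTop (𝓝 r) := by
      simpa using (tendsto_const_div_atTop_nhds_zero_nat (r * g + c)).const_add r
    rw [← (EReal.tendsto_coe.2 hupper).limsup_eq]
    refine limsup_le_limsup (eventually_ge_atTop 1 |>.mono fun k hk => ?_)
    have hk0 : (0 : ℝ) < k := by exact_mod_cast hk
    have hkg : (a k - c) / (k + g) < r :=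
      EReal.coe_lt_coe_iff.1 ((le_iSup₂_of_le k hk le_rfl).trans_lt hr)
    rw [div_lt_iff₀ (by positivity)] at hkg
    refine EReal.coe_le_coe_iff.2 ?_
    rw [div_le_iff₀ hk0, add_mul, div_mul_cancel₀ _ hk0.ne']
    linarith

end AlmostSuperadditive

section Sweep

variable {X : Type*} {T : X → X} {A : Set X} {𝔅 : ℕ → MeasurableSpace X}

def avoidSet (T : X → X) (A : Set X) (k : ℕ) : Set X :=
  ⋂ i ∈ Finset.range k, T^[i] ⁻¹' Aᶜ

theorem avoidSet_add_subset (j g m : ℕ) :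
    avoidSet T A (j + g + m) ⊆ avoidSet T A j ∩ T^[g + j] ⁻¹' avoidSet T A m := by
  intro x hx
  simp only [avoidSet, Set.mem_iInter, Finset.mem_range, Set.mem_preimage,
    Set.mem_inter_iff] at hx ⊢
  refine ⟨fun i hi => hx i (by omega), fun i hi => ?_⟩
  rw [← Function.iterate_add_apply]
  exact hx _ (by omega)

theorem measurableSet_preimage_iterate
    (h𝔅T : ∀ n (S : Set X), MeasurableSet[𝔅 n] S → MeasurableSet[𝔅 (n + 1)] (T ⁻¹' S))
    {n : ℕ} {S : Set X} (hS : MeasurableSet[𝔅 n] S) (i : ℕ) :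
    MeasurableSet[𝔅 (n + i)] (T^[i] ⁻¹' S) := by
  induction i with
  | zero => exact hS
  | succ i ih => simpa only [Function.iterate_succ, Set.preimage_comp] using h𝔅T _ _ ih

theorem measurableSet_avoidSet (h𝔅mono : Monotone 𝔅)
    (h𝔅T : ∀ n (S : Set X), MeasurableSet[𝔅 n] S → MeasurableSet[𝔅 (n + 1)] (T ⁻¹' S))
    {n : ℕ} (hA : MeasurableSet[𝔅 n] A) (k : ℕ) : MeasurableSet[𝔅 (n + k)] (avoidSet T A k) :=
  Finset.measurableSet_biInter _ fun i hi =>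
    h𝔅mono (Nat.add_le_add_left (Finset.mem_range.1 hi).le n) _ (measurableSet_preimage_iterate h𝔅T hA.compl i)

variable [MeasurableSpace X] {μ : Measure X}

theorem sweep_eq_measureReal (k : ℕ) : sweep μ T A k = μ.real (avoidSet T A k) := rfl

theorem sweep_le_one [IsZeroOrProbabilityMeasure μ] (k : ℕ) : sweep μ T A k ≤ 1 :=
  measureReal_le_one

theorem sweep_add_le [IsFiniteMeasure μ] {C : ℝ} (h𝔅mono : Monotone 𝔅)
    (h𝔅T : ∀ n (S : Set X), MeasurableSet[𝔅 n] S → MeasurableSet[𝔅 (n + 1)] (T ⁻¹' S))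
    (hdecor : ∀ (n m : ℕ) (S B : Set X), MeasurableSet[𝔅 n] S → MeasurableSet[𝔅 m] B →
      μ.real (S ∩ T^[n] ⁻¹' B) ≤ C * μ.real S * μ.real B)
    {n : ℕ} (hA : MeasurableSet[𝔅 n] A) (j m : ℕ) :
    sweep μ T A (j + n + m) ≤ C * (sweep μ T A j * sweep μ T A m) := by
  simp only [sweep_eq_measureReal]
  calc μ.real (avoidSet T A (j + n + m))
      ≤ μ.real (avoidSet T A j ∩ T^[n + j] ⁻¹' avoidSet T A m) :=
        measureReal_mono (avoidSet_add_subset j n m)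
    _ ≤ C * μ.real (avoidSet T A j) * μ.real (avoidSet T A m) :=
        hdecor _ _ _ _ (measurableSet_avoidSet h𝔅mono h𝔅T hA j)
          (measurableSet_avoidSet h𝔅mono h𝔅T hA m)
    _ = _ := mul_assoc _ _ _

end Sweep

theorem escape_rate_exists_general
    {X : Type*} [m0 : MeasurableSpace X] (μ : Measure X) [IsProbabilityMeasure μ]
    (T : X → X)
    (𝔅 : ℕ → MeasurableSpace X) (h𝔅mono : Monotone 𝔅)
    (h𝔅T : ∀ n (S : Set X), MeasurableSet[𝔅 n] S → MeasurableSet[𝔅 (n + 1)] (T ⁻¹' S))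
    (ψ : ℕ → ℝ) (hψnonneg : ∀ n, 0 ≤ ψ n)
    (hmix : ∀ (n m k : ℕ) (S B : Set X), MeasurableSet[𝔅 n] S → MeasurableSet[𝔅 m] B →
      |(μ (S ∩ T^[k + n] ⁻¹' B)).toReal - (μ S).toReal * (μ B).toReal| ≤
        ψ k * (μ S).toReal * (μ B).toReal)
    (A : Set X) (nA : ℕ) (hnA : MeasurableSet[𝔅 nA] A)
    (hs : ∀ k : ℕ, 0 < sweep μ T A k) :
    ∃ ρ : EReal,
      Tendsto (fun k : ℕ => ((-Real.log (sweep μ T A k) / k : ℝ) : EReal))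
        atTop (nhds ρ) := by
  have hC : 0 < 1 + ψ 0 := by linarith [hψnonneg 0]
  have hdecor (n m : ℕ) (S B : Set X) (hS : MeasurableSet[𝔅 n] S) (hB : MeasurableSet[𝔅 m] B) :
      μ.real (S ∩ T^[n] ⁻¹' B) ≤ (1 + ψ 0) * μ.real S * μ.real B := by
    have := (abs_le.1 (hmix n m 0 S B hS hB)).2
    simp only [zero_add, ← measureReal_def] at this
    linarith
  refine ⟨_, tendsto_div_of_almost_superadditive (g := nA) (c := Real.log (1 + ψ 0))
    (fun k => neg_nonneg.2 (Real.log_nonpos (hs k).le (sweep_le_one k))) fun j m => ?_⟩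
  have hlog := Real.log_le_log (hs _) (sweep_add_le h𝔅mono h𝔅T hdecor hnA j m)
  rw [Real.log_mul hC.ne' (mul_pos (hs j) (hs m)).ne', Real.log_mul (hs j).ne' (hs m).ne'] at hlog
  linarith

theorem escape_rate_exists
    {X : Type*} [m0 : MeasurableSpace X] (μ : Measure X) [IsProbabilityMeasure μ]
    (T : X → X) (hE : Ergodic T μ)
    (𝔅 : ℕ → MeasurableSpace X) (h𝔅le : ∀ n, 𝔅 n ≤ m0) (h𝔅mono : Monotone 𝔅)
    (h𝔅T : ∀ n (S : Set X), MeasurableSet[𝔅 n] S → MeasurableSet[𝔅 (n + 1)] (T ⁻¹' S))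
    (ψ : ℕ → ℝ) (hψnonneg : ∀ n, 0 ≤ ψ n) (hψ0 : Tendsto ψ atTop (nhds 0))
    (hψ1 : ∀ n, ψ n ≤ ψ 1)
    (hmix : ∀ (n m k : ℕ) (S B : Set X), MeasurableSet[𝔅 n] S → MeasurableSet[𝔅 m] B →
      |(μ (S ∩ T^[k + n] ⁻¹' B)).toReal - (μ S).toReal * (μ B).toReal| ≤
        ψ k * (μ S).toReal * (μ B).toReal)
    (A : Set X) (hpos : 0 < μ A) (nA : ℕ) (hnA : MeasurableSet[𝔅 nA] A)
    (hnAmin : ∀ m, MeasurableSet[𝔅 m] A → nA ≤ m)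
    (hs : ∀ k : ℕ, 0 < sweep μ T A k) :
    ∃ ρ : EReal,
      Tendsto (fun k : ℕ => ((-Real.log (sweep μ T A k) / k : ℝ) : EReal))
        atTop (nhds ρ) :=
  escape_rate_exists_general (m0 := m0) μ T 𝔅 h𝔅mono h𝔅T ψ hψnonneg hmix A nA hnA hs
end

section
/- In a ψ-mixing system, for ε < 0.1 and A ∈ A_ε, the escape rate satisfies the upper bound ρ_A ≤ -(1/r_A)·log q_A, where q_A := 1 - r_A μ(A)(1 + ψ_{ℓ_A} + 2 r_A μ(A)), via the inequality s_A(m·r_A) ≥ q_A^m for all m ≥ 1. -/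
open MeasureTheory Filter Topology

/-!
Write `s k` for the sweep-out sequence and `a = μ A`. Its increments `s k - s (k + 1)` measure the
set of points whose first visit to `A` happens at time `k`; by invariance they decrease in `k`.
The heart of the argument is the bound `s k - s (k + 1) ≤ β s k` with `β = a (1 + ψ ℓ + 2 r a)`,
proved by strong induction: for `k < r` it is a union bound, and for `k ≥ r` the mixing
inequality at gap `ℓ`, applied to the `𝔅 (n + k - r)`-measurable event "no visit up to
time `k - r`", bounds the increment by `(1 + ψ ℓ) a s (k - r + 1)`, while the induction
hypothesis shows that `s` loses at most a factor `1 - (r - 1) β` over the last `r - 1` steps.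
Summing `r` consecutive increments then gives `s (k + r) ≥ (1 - r β) s k`, hence
`s (m r) ≥ (1 - r β) ^ m`, and the escape rate bound follows along the subsequence `m r`.
-/

section RealSequences

variable {s : ℕ → ℝ}

theorem sub_le_mul_of_sub_succ_le {g : ℝ} {i : ℕ} :
    ∀ n : ℕ, (∀ t, i ≤ t → t < i + n → s t - s (t + 1) ≤ g) → s i - s (i + n) ≤ n * g
  | 0, _ => by simp
  | n + 1, h => by
    have ih := sub_le_mul_of_sub_succ_le n fun t ht ht' => h t ht (by omega)
    have hlast := h (i + n) (by omega) (by omega)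
    push_cast
    rw [← add_assoc]
    linarith

theorem sub_succ_le_mul_of_shifted_bound {r : ℕ} {β c : ℝ} (hr : 0 < r)
    (hs0 : ∀ k, 0 ≤ s k) (hs : Antitone s) (hβ : 0 ≤ β) (hc : c ≤ β * (1 - (r - 1) * β))
    (hshort : ∀ k < r, s k - s (k + 1) ≤ β * s k)
    (hlong : ∀ j, s (j + r) - s (j + r + 1) ≤ c * s (j + 1)) :
    ∀ k, s k - s (k + 1) ≤ β * s k := by
  intro k
  induction k using Nat.strong_induction_on with
  | _ k ih =>
  rcases lt_or_ge k r with hk | hk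
  · exact hshort k hk
  obtain ⟨j, rfl⟩ : ∃ j, k = j + r := ⟨k - r, by omega⟩
  have hdrop : s (j + 1) - s (j + 1 + (r - 1)) ≤ ((r - 1 : ℕ) : ℝ) * (β * s (j + 1)) :=
    sub_le_mul_of_sub_succ_le (r - 1) fun t ht ht' =>
      (ih t (by omega)).trans (mul_le_mul_of_nonneg_left (hs ht) hβ)
  rw [show j + 1 + (r - 1) = j + r by omega, Nat.cast_pred hr] at hdrop
  calc s (j + r) - s (j + r + 1) ≤ c * s (j + 1) := hlong j
    _ ≤ β * (1 - (r - 1) * β) * s (j + 1) := mul_le_mul_of_nonneg_right hc (hs0 _)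
    _ ≤ β * s (j + r) := by nlinarith

theorem mul_le_add_of_sub_succ_le {r : ℕ} {β : ℝ}
    (hanti : Antitone fun k => s k - s (k + 1)) (hgap : ∀ k, s k - s (k + 1) ≤ β * s k)
    (k : ℕ) : (1 - r * β) * s k ≤ s (k + r) := by
  have := sub_le_mul_of_sub_succ_le (s := s) (g := β * s k) r fun t ht _ =>
    (hanti ht).trans (hgap k)
  linarith

theorem pow_mul_le_of_mul_le_add {r : ℕ} {q : ℝ} (hq : 0 ≤ q)
    (h : ∀ k, q * s k ≤ s (k + r)) : ∀ m : ℕ, q ^ m * s 0 ≤ s (m * r)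
  | 0 => by simp
  | m + 1 => by
    calc q ^ (m + 1) * s 0 = q * (q ^ m * s 0) := by ring
      _ ≤ q * s (m * r) := mul_le_mul_of_nonneg_left (pow_mul_le_of_mul_le_add hq h m) hq
      _ ≤ s ((m + 1) * r) := by rw [Nat.succ_mul]; exact h _

theorem le_of_tendsto_neg_log_div_of_pow_le {ρ q : ℝ} {r : ℕ} (hr : 0 < r) (hq : 0 < q)
    (hρ : Tendsto (fun k : ℕ => -Real.log (s k) / k) atTop (𝓝 ρ))
    (hpow : ∀ m : ℕ, q ^ m ≤ s (m * r)) : ρ ≤ -(1 / (r : ℝ)) * Real.log q := by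
  have hsub : Tendsto (fun m : ℕ => m * r) atTop atTop :=
    tendsto_id.atTop_mul_const' hr
  refine le_of_tendsto (hρ.comp hsub) ?_
  filter_upwards [eventually_ge_atTop 1] with m hm
  have hmr : (0 : ℝ) < m * r := by positivity
  have hlog : m * Real.log q ≤ Real.log (s (m * r)) := by
    rw [← Real.log_pow]
    exact Real.log_le_log (pow_pos hq m) (hpow m)
  simp only [Function.comp_apply, Nat.cast_mul]
  rw [div_le_iff₀ hmr]
  field_simp
  nlinarith

end RealSequences

section EscapeSet

variable {X : Type*} {T : X → X} {A : Set X}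

def escapeSet (T : X → X) (A : Set X) (k : ℕ) : Set X :=
  ⋂ i ∈ Finset.range k, T^[i] ⁻¹' Aᶜ

theorem escapeSet_zero : escapeSet T A 0 = Set.univ := by
  simp [escapeSet]

theorem escapeSet_succ (k : ℕ) : escapeSet T A (k + 1) = escapeSet T A k ∩ T^[k] ⁻¹' Aᶜ := by
  rw [escapeSet, Finset.range_add_one, Finset.set_biInter_insert, Set.inter_comm]
  rfl

theorem escapeSet_antitone : Antitone (escapeSet T A) := fun _ _ hkl =>
  Set.biInter_subset_biInter_left (Finset.range_subset_range.mpr hkl)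

theorem compl_escapeSet (k : ℕ) : (escapeSet T A k)ᶜ = ⋃ i ∈ Finset.range k, T^[i] ⁻¹' A := by
  simp [escapeSet, Set.compl_iInter]

theorem escapeSet_succ_inter_subset (k : ℕ) :
    escapeSet T A (k + 1) ∩ T^[k + 1] ⁻¹' A ⊆ T ⁻¹' (escapeSet T A k ∩ T^[k] ⁻¹' A) := by
  rintro x ⟨hx, hxA⟩
  simp only [escapeSet, Set.mem_iInter, Finset.mem_range, Set.mem_preimage, Set.mem_inter_iff]
    at hx hxA ⊢
  refine ⟨fun i hi => ?_, by rwa [← Function.iterate_succ_apply]⟩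
  rw [← Function.iterate_succ_apply]
  exact hx (i + 1) (by omega)

theorem measurableSet_escapeSet [MeasurableSpace X] (hT : Measurable T) (hA : MeasurableSet A)
    (k : ℕ) :
    MeasurableSet (escapeSet T A k) :=
  Finset.measurableSet_biInter _ fun i _ => hA.compl.preimage (hT.iterate i)

end EscapeSet

section Sweep

variable {X : Type*} [MeasurableSpace X] {μ : Measure X} {T : X → X} {A : Set X}

theorem sweep_eq_measureReal_escapeSet (k : ℕ) : sweep μ T A k = μ.real (escapeSet T A k) :=
  rfl

theorem sweep_zero [IsProbabilityMeasure μ] : sweep μ T A 0 = 1 := by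
  simp [sweep_eq_measureReal_escapeSet, escapeSet_zero]

theorem sweep_antitone [IsFiniteMeasure μ] : Antitone (sweep μ T A) := fun _ _ hkl =>
  measureReal_mono (escapeSet_antitone hkl)

theorem sweep_sub_sweep_succ [IsFiniteMeasure μ] (hT : Measurable T) (hA : MeasurableSet A)
    (k : ℕ) : sweep μ T A k - sweep μ T A (k + 1) = μ.real (escapeSet T A k ∩ T^[k] ⁻¹' A) := by
  rw [sweep_eq_measureReal_escapeSet, sweep_eq_measureReal_escapeSet, escapeSet_succ,
    ← measureReal_inter_add_sdiff (s := escapeSet T A k) (hA.preimage (hT.iterate k)),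
    Set.sdiff_eq, Set.preimage_compl]
  ring

theorem sweep_sub_sweep_succ_antitone [IsFiniteMeasure μ] (hT : MeasurePreserving T μ μ)
    (hA : MeasurableSet A) :
    Antitone fun k => sweep μ T A k - sweep μ T A (k + 1) := by
  refine antitone_nat_of_succ_le fun k => ?_
  simp only [sweep_sub_sweep_succ hT.measurable hA]
  calc μ.real (escapeSet T A (k + 1) ∩ T^[k + 1] ⁻¹' A)
      ≤ μ.real (T ⁻¹' (escapeSet T A k ∩ T^[k] ⁻¹' A)) :=
        measureReal_mono (escapeSet_succ_inter_subset k)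
    _ = μ.real (escapeSet T A k ∩ T^[k] ⁻¹' A) :=
        hT.measureReal_preimage ((measurableSet_escapeSet hT.measurable hA k).inter
          (hA.preimage (hT.measurable.iterate k))).nullMeasurableSet

theorem sweep_sub_sweep_succ_le_measureReal [IsFiniteMeasure μ] (hT : MeasurePreserving T μ μ)
    (hA : MeasurableSet A) (k : ℕ) :
    sweep μ T A k - sweep μ T A (k + 1) ≤ μ.real A := by
  rw [sweep_sub_sweep_succ hT.measurable hA]
  calc μ.real (escapeSet T A k ∩ T^[k] ⁻¹' A) ≤ μ.real (T^[k] ⁻¹' A) :=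
        measureReal_mono Set.inter_subset_right
    _ = μ.real A := (hT.iterate k).measureReal_preimage hA.nullMeasurableSet

theorem one_sub_mul_le_sweep [IsProbabilityMeasure μ] (hT : MeasurePreserving T μ μ)
    (hA : MeasurableSet A) (k : ℕ) :
    1 - k * μ.real A ≤ sweep μ T A k := by
  have hunion : μ.real (escapeSet T A k)ᶜ ≤ k * μ.real A := by
    rw [compl_escapeSet]
    calc μ.real (⋃ i ∈ Finset.range k, T^[i] ⁻¹' A)
        ≤ ∑ i ∈ Finset.range k, μ.real (T^[i] ⁻¹' A) := measureReal_biUnion_finset_le _ _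
      _ = k * μ.real A := by
        simp [(hT.iterate _).measureReal_preimage hA.nullMeasurableSet]
  rw [probReal_compl_eq_one_sub (measurableSet_escapeSet hT.measurable hA k)] at hunion
  rw [sweep_eq_measureReal_escapeSet]
  linarith


theorem sweep_sub_sweep_succ_le_mul_of_lt [IsProbabilityMeasure μ] (hT : MeasurePreserving T μ μ)
    (hA : MeasurableSet A) {β : ℝ} {r k : ℕ} (hβ : 0 ≤ β) (hk : k < r)
    (hβa : μ.real A ≤ β * (1 - (r - 1) * μ.real A)) :
    sweep μ T A k - sweep μ T A (k + 1) ≤ β * sweep μ T A k := by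
  have hkr : (k : ℝ) ≤ r - 1 := by
    rw [le_sub_iff_add_le]
    exact_mod_cast hk
  calc sweep μ T A k - sweep μ T A (k + 1) ≤ μ.real A :=
        sweep_sub_sweep_succ_le_measureReal hT hA k
    _ ≤ β * (1 - (r - 1) * μ.real A) := hβa
    _ ≤ β * (1 - k * μ.real A) := by gcongr
    _ ≤ β * sweep μ T A k := by gcongr; exact one_sub_mul_le_sweep hT hA k

end Sweep

section Filtration

variable {X : Type*} {T : X → X} {𝔅 : ℕ → MeasurableSpace X}

theorem measurableSet_preimage_iterate_of_filtration
    (h𝔅T : ∀ n (S : Set X), MeasurableSet[𝔅 n] S → MeasurableSet[𝔅 (n + 1)] (T ⁻¹' S))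
    {n : ℕ} {A : Set X} (hA : MeasurableSet[𝔅 n] A) :
    ∀ i, MeasurableSet[𝔅 (n + i)] (T^[i] ⁻¹' A)
  | 0 => hA
  | i + 1 => by
    rw [Function.iterate_succ, Set.preimage_comp]
    exact h𝔅T _ _ (measurableSet_preimage_iterate_of_filtration h𝔅T hA i)

theorem measurableSet_escapeSet_succ_of_filtration (h𝔅mono : Monotone 𝔅)
    (h𝔅T : ∀ n (S : Set X), MeasurableSet[𝔅 n] S → MeasurableSet[𝔅 (n + 1)] (T ⁻¹' S))
    {n : ℕ} {A : Set X} (hA : MeasurableSet[𝔅 n] A) (j : ℕ) :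
    MeasurableSet[𝔅 (n + j)] (escapeSet T A (j + 1)) := by
  refine Finset.measurableSet_biInter _ fun i hi =>
    h𝔅mono (by simp at hi; omega : n + i ≤ n + j) _ ?_
  rw [Set.preimage_compl]
  exact (measurableSet_preimage_iterate_of_filtration h𝔅T hA i).compl

end Filtration

section PsiMixing

/-- An event in `𝔅 n` is determined by the first `n` steps, so `k` is the gap between the events. -/
def IsPsiMixing {X : Type*} [MeasurableSpace X] (μ : Measure X) (T : X → X)
    (𝔅 : ℕ → MeasurableSpace X) (ψ : ℕ → ℝ) : Prop :=
  ∀ (n m k : ℕ) (S B : Set X), MeasurableSet[𝔅 n] S → MeasurableSet[𝔅 m] B →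
    |μ.real (S ∩ T^[k + n] ⁻¹' B) - μ.real S * μ.real B| ≤ ψ k * μ.real S * μ.real B

variable {X : Type*} [MeasurableSpace X] {μ : Measure X} {T : X → X}
  {𝔅 : ℕ → MeasurableSpace X} {ψ : ℕ → ℝ}

namespace IsPsiMixing

variable {n m : ℕ} {S B : Set X}

theorem measureReal_inter_le (h : IsPsiMixing μ T 𝔅 ψ) (hS : MeasurableSet[𝔅 n] S)
    (hB : MeasurableSet[𝔅 m] B) (k : ℕ) :
    μ.real (S ∩ T^[k + n] ⁻¹' B) ≤ (1 + ψ k) * μ.real S * μ.real B := by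
  have := (abs_le.mp (h n m k S B hS hB)).2
  linarith

theorem measureReal_mul_compl_eq_zero (h : IsPsiMixing μ T 𝔅 ψ) (hS : MeasurableSet[𝔅 0] S)
    (hψ : ψ 0 < 1) :
    μ.real S * μ.real Sᶜ = 0 := by
  have hmix := (abs_le.mp (h 0 0 0 S Sᶜ hS hS.compl)).1
  simp only [add_zero, Function.iterate_zero, Set.preimage_id, Set.inter_compl_self,
    measureReal_empty] at hmix
  have hprod : 0 ≤ μ.real S * μ.real Sᶜ := by positivity
  nlinarith

end IsPsiMixing

theorem sweep_sub_sweep_succ_le_of_isPsiMixing [IsFiniteMeasure μ] (hT : Measurable T)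
    (h𝔅mono : Monotone 𝔅)
    (h𝔅T : ∀ n (S : Set X), MeasurableSet[𝔅 n] S → MeasurableSet[𝔅 (n + 1)] (T ⁻¹' S))
    (hmix : IsPsiMixing μ T 𝔅 ψ) {n ℓ : ℕ} (hnℓ : 0 < n + ℓ) {A : Set X}
    (hA𝔅 : MeasurableSet[𝔅 n] A) (hA : MeasurableSet A) (j : ℕ) :
    sweep μ T A (j + (n + ℓ)) - sweep μ T A (j + (n + ℓ) + 1) ≤
      (1 + ψ ℓ) * μ.real A * sweep μ T A (j + 1) := by
  rw [sweep_sub_sweep_succ hT hA, show j + (n + ℓ) = ℓ + (n + j) by ring]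
  calc μ.real (escapeSet T A (ℓ + (n + j)) ∩ T^[ℓ + (n + j)] ⁻¹' A)
      ≤ μ.real (escapeSet T A (j + 1) ∩ T^[ℓ + (n + j)] ⁻¹' A) :=
        measureReal_mono (Set.inter_subset_inter_left _ (escapeSet_antitone (by omega)))
    _ ≤ (1 + ψ ℓ) * μ.real (escapeSet T A (j + 1)) * μ.real A := hmix.measureReal_inter_le
        (measurableSet_escapeSet_succ_of_filtration h𝔅mono h𝔅T hA𝔅 j) hA𝔅 ℓ
    _ = (1 + ψ ℓ) * μ.real A * sweep μ T A (j + 1) := by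
        rw [sweep_eq_measureReal_escapeSet]
        ring

end PsiMixing

theorem sweep_constants_of_small {a p r : ℝ} (ha : 0 < a) (hr : 1 ≤ r) (hra : r * a < 0.1)
    (hp0 : 0 ≤ p) (hp : p < 0.1) :
    a ≤ a * (1 + p + 2 * r * a) * (1 - (r - 1) * a) ∧
      (1 + p) * a ≤ a * (1 + p + 2 * r * a) * (1 - (r - 1) * (a * (1 + p + 2 * r * a))) ∧
      0 < 1 - r * a * (1 + p + 2 * r * a) := by
  set R := r * a
  set c := 1 + p + 2 * R
  have haR : a ≤ R := le_mul_of_one_le_left ha.le hr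
  have hc1 : 1 ≤ c := by linarith
  have hc2 : c ^ 2 ≤ 2 := by nlinarith
  have hsub : ∀ x, (r - 1) * x = r * x - x := fun x => by ring
  refine ⟨?_, ?_, by nlinarith⟩
  · -- `c (1 - R) ≥ (1 + 2R)(1 - R) ≥ 1` since `R ≤ 1/2`
    have : 1 ≤ c * (1 - R + a) := by nlinarith
    rw [hsub, mul_assoc]
    nlinarith
  · -- `c (1 - R c) - (1 + p) = R (2 - c²) ≥ 0`
    have : 1 + p ≤ c * (1 - R * c + a * c) := by nlinarith
    rw [hsub, ← mul_assoc r, mul_assoc a]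
    nlinarith

theorem escape_rate_upper_bound_general
    {X : Type*} [m0 : MeasurableSpace X] (μ : Measure X) [IsProbabilityMeasure μ]
    (T : X → X) (hE : Ergodic T μ)
    (𝔅 : ℕ → MeasurableSpace X) (h𝔅le : ∀ n, 𝔅 n ≤ m0) (h𝔅mono : Monotone 𝔅)
    (h𝔅T : ∀ n (S : Set X), MeasurableSet[𝔅 n] S → MeasurableSet[𝔅 (n + 1)] (T ⁻¹' S))
    (ψ : ℕ → ℝ) (hψnonneg : ∀ n, 0 ≤ ψ n)
    (hmix : ∀ (n m k : ℕ) (S B : Set X), MeasurableSet[𝔅 n] S → MeasurableSet[𝔅 m] B →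
      |(μ (S ∩ T^[k + n] ⁻¹' B)).toReal - (μ S).toReal * (μ B).toReal| ≤
        ψ k * (μ S).toReal * (μ B).toReal)
    (A : Set X) (hpos : 0 < μ A) (nA : ℕ) (hnA : MeasurableSet[𝔅 nA] A)
    (hs : ∀ k : ℕ, 0 < sweep μ T A k)
    (ε : ℝ) (hε1 : ε < 0.1)
    (ℓ : ℕ) (hℓψ : ψ ℓ < ε) (hℓμ : ((nA + ℓ : ℕ) : ℝ) * (μ A).toReal < ε)
    (ρ : ℝ)
    (hρ : Tendsto (fun k : ℕ => -Real.log (sweep μ T A k) / k) atTop (nhds ρ)) :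
    (∀ m : ℕ, 1 ≤ m →
        sweep μ T A (m * (nA + ℓ)) ≥
          (1 - ((nA + ℓ : ℕ) : ℝ) * (μ A).toReal *
            (1 + ψ ℓ + 2 * ((nA + ℓ : ℕ) : ℝ) * (μ A).toReal)) ^ m) ∧
      ρ ≤ -(1 / ((nA + ℓ : ℕ) : ℝ)) *
        Real.log (1 - ((nA + ℓ : ℕ) : ℝ) * (μ A).toReal *
          (1 + ψ ℓ + 2 * ((nA + ℓ : ℕ) : ℝ) * (μ A).toReal)) := by
  have hT : MeasurePreserving T μ μ := hE.toMeasurePreserving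
  have hA : MeasurableSet A := h𝔅le nA A hnA
  have ha : 0 < μ.real A := ENNReal.toReal_pos hpos.ne' (measure_ne_top μ A)
  have hr : 0 < nA + ℓ := by
    by_contra! hr0
    obtain ⟨rfl, rfl⟩ : nA = 0 ∧ ℓ = 0 := by omega
    have hAc : 0 < μ.real Aᶜ := by simpa [sweep_eq_measureReal_escapeSet, escapeSet] using hs 1
    exact (mul_pos ha hAc).ne' (IsPsiMixing.measureReal_mul_compl_eq_zero hmix hnA (by linarith))
  have hβ : 0 ≤ μ.real A * (1 + ψ ℓ + 2 * ((nA + ℓ : ℕ) : ℝ) * μ.real A) := by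
    have := hψnonneg ℓ
    positivity
  obtain ⟨hshort, hlong, hq⟩ := sweep_constants_of_small ha (by exact_mod_cast hr)
    (hℓμ.trans hε1) (hψnonneg ℓ) (hℓψ.trans hε1)
  have hgap := sub_succ_le_mul_of_shifted_bound (s := sweep μ T A) hr
    (fun _ => measureReal_nonneg) sweep_antitone hβ hlong
    (fun k hk => sweep_sub_sweep_succ_le_mul_of_lt hT hA hβ hk hshort)
    (sweep_sub_sweep_succ_le_of_isPsiMixing hT.measurable h𝔅mono h𝔅T hmix hr hnA hA)
  have hstep :=
    mul_le_add_of_sub_succ_le (r := nA + ℓ) (sweep_sub_sweep_succ_antitone hT hA) hgap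
  simp only [← mul_assoc] at hstep
  have hpow := pow_mul_le_of_mul_le_add hq.le hstep
  simp only [sweep_zero, mul_one] at hpow
  exact ⟨fun m _ => hpow m, le_of_tendsto_neg_log_div_of_pow_le hr hq hρ hpow⟩

theorem escape_rate_upper_bound
    {X : Type*} [m0 : MeasurableSpace X] (μ : Measure X) [IsProbabilityMeasure μ]
    (T : X → X) (hE : Ergodic T μ)
    (𝔅 : ℕ → MeasurableSpace X) (h𝔅le : ∀ n, 𝔅 n ≤ m0) (h𝔅mono : Monotone 𝔅)
    (h𝔅T : ∀ n (S : Set X), MeasurableSet[𝔅 n] S → MeasurableSet[𝔅 (n + 1)] (T ⁻¹' S))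
    (ψ : ℕ → ℝ) (hψnonneg : ∀ n, 0 ≤ ψ n) (hψ0 : Tendsto ψ atTop (nhds 0))
    (hψ1 : ∀ n, ψ n ≤ ψ 1)
    (hmix : ∀ (n m k : ℕ) (S B : Set X), MeasurableSet[𝔅 n] S → MeasurableSet[𝔅 m] B →
      |(μ (S ∩ T^[k + n] ⁻¹' B)).toReal - (μ S).toReal * (μ B).toReal| ≤
        ψ k * (μ S).toReal * (μ B).toReal)
    (A : Set X) (hpos : 0 < μ A) (nA : ℕ) (hnA : MeasurableSet[𝔅 nA] A)
    (hnAmin : ∀ m, MeasurableSet[𝔅 m] A → nA ≤ m)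
    (hs : ∀ k : ℕ, 0 < sweep μ T A k)
    (ε : ℝ) (hε : 0 < ε) (hε1 : ε < 0.1)
    (ℓ : ℕ) (hℓψ : ψ ℓ < ε) (hℓμ : ((nA + ℓ : ℕ) : ℝ) * (μ A).toReal < ε)
    (hcorr : (nA : ℝ) *
        (⨆ i ∈ Finset.Icc 1 nA, (μ (A ∩ T^[i] ⁻¹' A)).toReal / (μ A).toReal) < ε)
    (ρ : ℝ)
    (hρ : Tendsto (fun k : ℕ => -Real.log (sweep μ T A k) / k) atTop (nhds ρ)) :
    (∀ m : ℕ, 1 ≤ m →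
        sweep μ T A (m * (nA + ℓ)) ≥
          (1 - ((nA + ℓ : ℕ) : ℝ) * (μ A).toReal *
            (1 + ψ ℓ + 2 * ((nA + ℓ : ℕ) : ℝ) * (μ A).toReal)) ^ m) ∧
      ρ ≤ -(1 / ((nA + ℓ : ℕ) : ℝ)) *
        Real.log (1 - ((nA + ℓ : ℕ) : ℝ) * (μ A).toReal *
          (1 + ψ ℓ + 2 * ((nA + ℓ : ℕ) : ℝ) * (μ A).toReal)) :=
  escape_rate_upper_bound_general (m0 := m0) μ T hE 𝔅 h𝔅le h𝔅mono h𝔅T ψ hψnonneg hmix A hpos nA hnA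
    hs ε hε1 ℓ hℓψ hℓμ ρ hρ
end
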